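/- Let (G, w) be a weighted tournament on n vertices that has an optimal (minimum-weight) FVS S* with |S*| ≥ 2n/3. Let D be a set of n/6 vertices of smallest weight in V(G), let Δ = max_{v ∈ D} w(v), and define w'(v) = w(v) − Δ for v ∈ V(G) \ D. If R is an FVS of G − D with w'(R) ≤ 2·w'(R*) for some minimum-w'-weight FVS R* of G − D, then R ∪ D is an FVS of G with w(R ∪ D) ≤ 2·w(S*). -/

import Mathlib

open Finset

variable {V : Type*}

/-- A digraph (given by its arc relation) is acyclic if no vertex lies on a directed cycle. -/
def Acyclic (E : V → V → Prop) : Prop := ∀ v, ¬ Relation.TransGen E v v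

/-- The digraph obtained by deleting the vertex set `X`. -/
def Delete [DecidableEq V] (E : V → V → Prop) (X : Finset V) : V → V → Prop :=
  fun a b => a ∉ X ∧ b ∉ X ∧ E a b

/-- The subgraph induced on the vertex set `A`. -/
def Induce [DecidableEq V] (E : V → V → Prop) (A : Finset V) : V → V → Prop :=
  fun a b => a ∈ A ∧ b ∈ A ∧ E a b

/-- `S` is a feedback vertex set of the digraph `E`. -/
def IsFVS [DecidableEq V] (E : V → V → Prop) (S : Finset V) : Prop :=
  Acyclic (Delete E S)

/-- A tournament: no self-loops and exactly one arc between any two distinct vertices. -/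
def IsTournament (E : V → V → Prop) : Prop :=
  (∀ v, ¬ E v v) ∧ ∀ u v, u ≠ v → (E u v ↔ ¬ E v u)

/-- Weight of a vertex set. -/
def weight (w : V → ℕ) (S : Finset V) : ℕ := ∑ v ∈ S, w v

/-- Out-neighborhood. -/
def Nout [Fintype V] [DecidableEq V] (E : V → V → Prop) [DecidableRel E] (p : V) : Finset V :=
  Finset.univ.filter (fun u => E p u)

/-- In-neighborhood. -/
def Nin [Fintype V] [DecidableEq V] (E : V → V → Prop) [DecidableRel E] (p : V) : Finset V :=
  Finset.univ.filter (fun u => E u p)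

/-- `S` is a minimum-weight FVS of `(E, w)`. -/
def IsOptFVS [DecidableEq V] (E : V → V → Prop) (w : V → ℕ) (S : Finset V) : Prop :=
  IsFVS E S ∧ ∀ S', IsFVS E S' → weight w S ≤ weight w S'

/-- `S` is a `p`-disjoint FVS of `E`. -/
def IsPDisjFVS [DecidableEq V] (E : V → V → Prop) (p : V) (S : Finset V) : Prop :=
  IsFVS E S ∧ p ∉ S

/-- `S` is a minimum-weight `p`-disjoint FVS of `(E, w)`. -/
def IsOptPDisjFVS [DecidableEq V] (E : V → V → Prop) (w : V → ℕ) (p : V) (S : Finset V) : Prop :=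
  IsPDisjFVS E p S ∧ ∀ S', IsPDisjFVS E p S' → weight w S ≤ weight w S'

/-- `S` is a 2-approximate solution of `(E, w)`. -/
def TwoApproxFVS [DecidableEq V] (E : V → V → Prop) (w : V → ℕ) (S : Finset V) : Prop :=
  IsFVS E S ∧ ∀ S', IsOptFVS E w S' → weight w S ≤ 2 * weight w S'

/-- `S` is a 2-approximate `p`-disjoint solution of `(E, w)`. -/
def TwoApproxPDisj [DecidableEq V] (E : V → V → Prop) (w : V → ℕ) (p : V) (S : Finset V) : Prop :=
  IsPDisjFVS E p S ∧ ∀ S', IsOptPDisjFVS E w p S' → weight w S ≤ 2 * weight w S'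

/-- `l` is a topological sort of the subgraph of `E` induced on the vertex set `A`. -/
def IsTopoOn [DecidableEq V] (E : V → V → Prop) (A : Finset V) (l : List V) : Prop :=
  l.Nodup ∧ (∀ v, v ∈ l ↔ v ∈ A) ∧
    ∀ (i j : ℕ) (hi : i < l.length) (hj : j < l.length),
      E (l.get ⟨i, hi⟩) (l.get ⟨j, hj⟩) → i < j

/-! Off `D` the weights satisfy `w = w' + Δ`, so both `w(R ∪ D)` and `w(S⋆ \ D)` split into
a `w'`-part and `Δ` times a cardinality. The `w'`-parts compare by the approximation
guarantee, since `S⋆ \ D` is an FVS of `G - D`, and the cardinalities compare because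
`|R| + |D| ≤ n ≤ 2 |S⋆ \ D|`, the last step being where `|S⋆| ≥ 2n/3` and `|D| = n/6`
enter. -/

theorem Acyclic.mono {E E' : V → V → Prop} (h : E' ≤ E) (hE : Acyclic E) : Acyclic E' :=
  fun v hv => hE v (Relation.TransGen.mono h v v hv)

section DecidableEq

variable [DecidableEq V] {E : V → V → Prop}

theorem IsFVS.union_of_delete {D R : Finset V} (hR : IsFVS (Delete E D) R) :
    IsFVS E (R ∪ D) :=
  hR.mono fun a b ⟨ha, hb, hab⟩ => by
    simp only [mem_union, not_or] at ha hb
    exact ⟨ha.1, hb.1, ha.2, hb.2, hab⟩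

theorem IsFVS.delete_sdiff {S : Finset V} (hS : IsFVS E S) (D : Finset V) :
    IsFVS (Delete E D) (S \ D) :=
  hS.mono fun a b ⟨ha, hb, haD, hbD, hab⟩ => by
    simp only [mem_sdiff, not_and_or, not_not] at ha hb
    exact ⟨ha.resolve_right haD, hb.resolve_right hbD, hab⟩

end DecidableEq

theorem weight_eq_weight_sub_add_card_mul {w w' : V → ℕ} {Δ : ℕ} {S : Finset V}
    (hΔ : ∀ v ∈ S, Δ ≤ w v) (hw' : ∀ v ∈ S, w' v = w v - Δ) :
    weight w S = weight w' S + #S * Δ := by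
  rw [weight, weight, ← smul_eq_mul, ← sum_const, ← sum_add_distrib]
  refine sum_congr rfl fun v hv => ?_
  rw [hw' v hv]
  have := hΔ v hv
  omega

theorem le_two_mul_card_sdiff [DecidableEq V] {n : ℕ} {S D : Finset V}
    (hS : 2 * n ≤ 3 * #S) (hD : #D = n / 6) : n ≤ 2 * #(S \ D) := by
  have := le_card_sdiff D S
  omega

theorem stmt6_general [Fintype V] [DecidableEq V] (E : V → V → Prop)
    (w : V → ℕ) (Sstar : Finset V)
    (hopt : IsOptFVS E w Sstar)
    (hbig : 2 * Fintype.card V ≤ 3 * Sstar.card)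
    (D : Finset V) (hDcard : D.card = Fintype.card V / 6)
    (hDmin : ∀ v ∈ D, ∀ u ∉ D, w v ≤ w u)
    (Δ : ℕ) (hub : ∀ v ∈ D, w v ≤ Δ) (hmem : ∃ v ∈ D, w v = Δ)
    (w' : V → ℕ) (hw' : ∀ v ∉ D, w' v = w v - Δ)
    (R Rstar : Finset V) (hRsub : ∀ v ∈ R, v ∉ D)
    (hRstar : IsOptFVS (Delete E D) w' Rstar)
    (hR : IsFVS (Delete E D) R)
    (h2 : weight w' R ≤ 2 * weight w' Rstar) :
    IsFVS E (R ∪ D) ∧ weight w (R ∪ D) ≤ 2 * weight w Sstar := by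
  obtain ⟨v₀, hv₀D, rfl⟩ := hmem
  have hw_off_D : ∀ S : Finset V, Disjoint S D → weight w S = weight w' S + #S * w v₀ :=
    fun S hS => weight_eq_weight_sub_add_card_mul
      (fun v hv => hDmin v₀ hv₀D v (disjoint_left.1 hS hv))
      (fun v hv => hw' v (disjoint_left.1 hS hv))
  have hdisj : Disjoint R D := disjoint_left.mpr hRsub
  have hR_le : weight w' R ≤ 2 * weight w' (Sstar \ D) :=
    h2.trans (Nat.mul_le_mul_left 2 (hRstar.2 _ (hopt.1.delete_sdiff D)))
  have hcard : #R + #D ≤ Fintype.card V := by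
    rw [← card_union_of_disjoint hdisj]
    exact card_le_univ _
  have hcardS := le_two_mul_card_sdiff (D := D) hbig hDcard
  refine ⟨hR.union_of_delete, ?_⟩
  calc weight w (R ∪ D) = weight w R + weight w D := sum_union hdisj
    _ ≤ weight w' R + #R * w v₀ + #D * w v₀ := by
        rw [hw_off_D R hdisj]
        exact Nat.add_le_add_left (sum_le_card_nsmul D w _ hub) _
    _ ≤ 2 * weight w' (Sstar \ D) + Fintype.card V * w v₀ := by
        rw [add_assoc, ← add_mul]
        gcongr
    _ ≤ 2 * (weight w' (Sstar \ D) + #(Sstar \ D) * w v₀) := by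
        rw [mul_add, ← mul_assoc]
        gcongr
    _ = 2 * weight w (Sstar \ D) := by rw [hw_off_D _ sdiff_disjoint]
    _ ≤ 2 * weight w Sstar := Nat.mul_le_mul_left 2 (sum_le_sum_of_subset sdiff_subset)

/-- If `(G, w)` has an optimal FVS `S⋆` with `|S⋆| ≥ 2n/3`, `D` is a set of `n/6`
vertices of smallest weight, `Δ = max_{v ∈ D} w(v)` and `w'(v) = w(v) - Δ` off `D`, then for any
2-approximate solution `R` of `(G - D, w')`, the set `R ∪ D` is a 2-approximate solution of
`(G, w)`. -/
theorem stmt6 [Fintype V] [DecidableEq V] (E : V → V → Prop) [DecidableRel E]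
    (hT : IsTournament E) (w : V → ℕ) (Sstar : Finset V)
    (hopt : IsOptFVS E w Sstar)
    (hbig : 2 * Fintype.card V ≤ 3 * Sstar.card)
    (D : Finset V) (hDcard : D.card = Fintype.card V / 6)
    (hDmin : ∀ v ∈ D, ∀ u ∉ D, w v ≤ w u)
    (Δ : ℕ) (hub : ∀ v ∈ D, w v ≤ Δ) (hmem : ∃ v ∈ D, w v = Δ)
    (w' : V → ℕ) (hw' : ∀ v ∉ D, w' v = w v - Δ)
    (R Rstar : Finset V) (hRsub : ∀ v ∈ R, v ∉ D)
    (hRstar : IsOptFVS (Delete E D) w' Rstar)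
    (hR : IsFVS (Delete E D) R)
    (h2 : weight w' R ≤ 2 * weight w' Rstar) :
    IsFVS E (R ∪ D) ∧ weight w (R ∪ D) ≤ 2 * weight w Sstar :=
  stmt6_general E w Sstar hopt hbig D hDcard hDmin Δ hub hmem w' hw' R Rstar hRsub hRstar hR h2
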